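/- Let G be a graph and S⊆V(G) a set satisfying (H1) and (H2). Let F ∈ cmd_3(G−S) and s∈S. If N(s) intersects more than one class of F, then either N(s)∩F = F∖C for a single class C of F, or N(s)∩F = F. -/

import Mathlib

namespace PrisonFreePaper

variable {V : Type*}

/-- The prison graph on 5 vertices: `K₅` minus the two edges `{4,2}` and `{4,3}`
(which share the vertex `4`).  Thus `{0,1,2,3}` is a 4-clique and the vertex `4`
is adjacent exactly to `0` and `1`. -/
def prison : SimpleGraph (Fin 5) where
  Adj a b := a ≠ b ∧ ¬((a = 4 ∧ (b = 2 ∨ b = 3)) ∨ (b = 4 ∧ (a = 2 ∨ a = 3)))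
  symm := by
    constructor
    rintro a b ⟨h1, h2⟩
    exact ⟨h1.symm, by tauto⟩
  loopless := by
    constructor
    rintro a ⟨h, _⟩
    exact h rfl

/-- `P` is a 5-vertex set inducing a subgraph of `G` isomorphic to the prison. -/
def InducesPrison (G : SimpleGraph V) (P : Set V) : Prop :=
  ∃ f : Fin 5 ↪ V, Set.range f = P ∧ ∀ a b, G.Adj (f a) (f b) ↔ prison.Adj a b

/-- `G` is prison-free: no 5-vertex set induces a prison. -/
def PrisonFree (G : SimpleGraph V) : Prop :=
  ¬ ∃ P : Set V, InducesPrison G P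

/-- `P` is the set of classes witnessing that the induced subgraph `G[F]` is
complete multipartite: the classes are nonempty, pairwise disjoint, their union
is `F`, and two vertices of `F` are adjacent iff they lie in different classes. -/
def IsCMP (G : SimpleGraph V) (F : Set V) (P : Set (Set V)) : Prop :=
  (∀ C ∈ P, C.Nonempty ∧ C ⊆ F) ∧
  (⋃₀ P = F) ∧
  (∀ C ∈ P, ∀ D ∈ P, C ≠ D → Disjoint C D) ∧
  (∀ u ∈ F, ∀ v ∈ F, (G.Adj u v ↔ ¬ ∃ C ∈ P, u ∈ C ∧ v ∈ C))

/-- The induced subgraph `G[F]` is complete multipartite. -/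
def CMP (G : SimpleGraph V) (F : Set V) : Prop := ∃ P, IsCMP G F P

/-- The induced subgraph `G[F]` is complete multipartite with at least `p` classes. -/
def CMPAtLeast (G : SimpleGraph V) (F : Set V) (p : ℕ) : Prop :=
  ∃ P, IsCMP G F P ∧ ∃ f : Fin p ↪ Set V, ∀ i, f i ∈ P

/-- `F ∈ cmd_p` of the induced subgraph of `G` on the ground set `W`:
`F` is an inclusion-wise maximal subset of `W` inducing a complete multipartite
graph with at least `p` classes. -/
def Cmd (G : SimpleGraph V) (W : Set V) (p : ℕ) (F : Set V) : Prop :=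
  F ⊆ W ∧ CMPAtLeast G F p ∧
    ∀ F', F' ⊆ W → F ⊆ F' → CMPAtLeast G F' p → F' = F

/-- The neighbourhood of `v` in `G` intersects at most one class of `P`. -/
def MeetsAtMostOneClass (G : SimpleGraph V) (P : Set (Set V)) (v : V) : Prop :=
  ∀ C ∈ P, ∀ D ∈ P, (∃ x ∈ C, G.Adj v x) → (∃ y ∈ D, G.Adj v y) → C = D

/-- The induced subgraph `G[X]`, viewed as a graph on the same vertex set
(only edges with both endpoints in `X` are kept). -/
def inducedOn (G : SimpleGraph V) (X : Set V) : SimpleGraph V where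
  Adj a b := G.Adj a b ∧ a ∈ X ∧ b ∈ X
  symm := by constructor; rintro a b ⟨h, ha, hb⟩; exact ⟨h.symm, hb, ha⟩
  loopless := by constructor; rintro a ⟨h, _⟩; exact (G.ne_of_adj h) rfl

/-- The set of edges of `G` with both endpoints in `X`, i.e. the edges of `G[X]`. -/
def edgesWithin (G : SimpleGraph V) (X : Set V) : Set (Sym2 V) :=
  (inducedOn G X).edgeSet

/-- `(G,k)` is a yes-instance of Prison-Free Edge Deletion. -/
def DeletionYes (G : SimpleGraph V) (k : ℕ) : Prop :=
  ∃ A : Set (Sym2 V), A ⊆ G.edgeSet ∧ A.Finite ∧ A.ncard ≤ k ∧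
    PrisonFree (G.deleteEdges A)

/-- `P` is a strict supergraph of a prison in `G`: a 5-vertex set whose induced
subgraph is `K₅` or `K₅` minus one edge (at most one non-adjacent pair). -/
def StrictSupPrison (G : SimpleGraph V) (P : Set V) : Prop :=
  P.ncard = 5 ∧ ∃ u v : V, ∀ x ∈ P, ∀ y ∈ P, x ≠ y → ¬ G.Adj x y →
    (x = u ∧ y = v) ∨ (x = v ∧ y = u)

/-- `P` is a supergraph of a prison in `G`: a 5-vertex set whose induced subgraph
contains a prison on `P` as a spanning subgraph, i.e. all non-adjacent pairs in `P`
are among two pairs sharing a common vertex. -/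
def SupPrison (G : SimpleGraph V) (P : Set V) : Prop :=
  P.ncard = 5 ∧ ∃ w u v : V, ∀ x ∈ P, ∀ y ∈ P, x ≠ y → ¬ G.Adj x y →
    (({x, y} : Set V) = {w, u} ∨ ({x, y} : Set V) = {w, v})

/-- Hypothesis (H1): every edge of `G` that does not have both endpoints in `S`
is contained in a strict supergraph of a prison in `G`. -/
def H1 (G : SimpleGraph V) (S : Set V) : Prop :=
  ∀ u v : V, G.Adj u v → ¬(u ∈ S ∧ v ∈ S) →
    ∃ P, StrictSupPrison G P ∧ u ∈ P ∧ v ∈ P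

/-- Hypothesis (H2): every 5-vertex set inducing a prison in `G` contains at least
two edges with both endpoints in `S`. -/
def H2 (G : SimpleGraph V) (S : Set V) : Prop :=
  ∀ P, InducesPrison G P →
    ∃ e₁ e₂ : Sym2 V, e₁ ≠ e₂ ∧ e₁ ∈ edgesWithin G (P ∩ S) ∧ e₂ ∈ edgesWithin G (P ∩ S)

/-- `B`: the edges of `G−S` lying in no triangle of `G−S`. -/
def BSet (G : SimpleGraph V) (S : Set V) : Set (Sym2 V) :=
  {e ∈ edgesWithin G Sᶜ | ¬ ∃ w ∈ Sᶜ, ∀ x ∈ e, G.Adj w x}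

/-- `B_e` for the edge `e = ab` of `G[S]`: the edges of `B` both of whose endpoints
are adjacent in `G` to both `a` and `b`. -/
def BOf (G : SimpleGraph V) (S : Set V) (a b : V) : Set (Sym2 V) :=
  {f ∈ BSet G S | ∀ x ∈ f, G.Adj x a ∧ G.Adj x b}

/-- `V(B_e)`: the set of endpoints of the edges of `B_e`. -/
def BVerts (G : SimpleGraph V) (S : Set V) (a b : V) : Set V :=
  {x | ∃ f ∈ BOf G S a b, x ∈ f}

/-- The graph `G ∪ A` obtained by adding the pairs in `A` as edges. -/
def addEdges (G : SimpleGraph V) (A : Set (Sym2 V)) : SimpleGraph V :=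
  G ⊔ SimpleGraph.fromEdgeSet A

/-- `A` is a prison-free completion set for `G`: a set of non-edges (unordered
pairs of distinct vertices not adjacent in `G`) whose addition makes `G` prison-free. -/
def CompletionSet (G : SimpleGraph V) (A : Set (Sym2 V)) : Prop :=
  (∀ e ∈ A, ¬ e.IsDiag) ∧ (∀ e ∈ A, e ∉ G.edgeSet) ∧ PrisonFree (addEdges G A)

/-- `A` is a minimal prison-free completion set for `G`. -/
def MinCompletionSet (G : SimpleGraph V) (A : Set (Sym2 V)) : Prop :=
  CompletionSet G A ∧ ∀ A' ⊂ A, ¬ CompletionSet G A'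

/-- `A` is a solution to the instance `(G,k)` of Prison-Free Edge Completion:
a prison-free completion set of size at most `k`. -/
def Solution (G : SimpleGraph V) (k : ℕ) (A : Set (Sym2 V)) : Prop :=
  CompletionSet G A ∧ A.Finite ∧ A.ncard ≤ k

/-- `A` is a minimal solution to `(G,k)`: a solution no proper subset of which is a
prison-free completion set. -/
def MinSolution (G : SimpleGraph V) (k : ℕ) (A : Set (Sym2 V)) : Prop :=
  Solution G k A ∧ ∀ A' ⊂ A, ¬ CompletionSet G A'

/-- `K` is a set of 4 vertices inducing a complete graph `K₄` in `G`. -/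
def IsK4 (G : SimpleGraph V) (K : Set V) : Prop :=
  K.ncard = 4 ∧ ∀ u ∈ K, ∀ v ∈ K, u ≠ v → G.Adj u v

/-- The modulator property of the set `S` (output of the sunflower-based
Lemma): for every prison `P` in `G` and every edge set `A ⊆ E(G)` with `|A| ≤ k`,
if deleting `A` from `G[S]` yields a prison-free graph then `A` contains an edge
of `G[P]`. -/
def GoodModulator (G : SimpleGraph V) (k : ℕ) (S : Set V) : Prop :=
  ∀ P : Set V, InducesPrison G P →
    ∀ A : Set (Sym2 V), A ⊆ G.edgeSet → A.Finite → A.ncard ≤ k →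
      PrisonFree ((inducedOn G S).deleteEdges A) →
      ∃ e ∈ A, e ∈ edgesWithin G P

/-- Hypothesis (H3): for every `F' ∈ cmd₃(G−S)` and every inclusion-wise maximal
set `F ⊇ F'` such that `G[F]` is complete multipartite, some vertex outside `F`
has neighbours in at least two classes of `F`. -/
def H3 (G : SimpleGraph V) (S : Set V) : Prop :=
  ∀ F', Cmd G Sᶜ 3 F' → ∀ F : Set V, F' ⊆ F → CMP G F →
    (∀ F'', F ⊆ F'' → CMP G F'' → F'' = F) →
    ∃ v ∉ F, ∃ P, IsCMP G F P ∧
      ∃ C ∈ P, ∃ D ∈ P, C ≠ D ∧ (∃ x ∈ C, G.Adj v x) ∧ ∃ y ∈ D, G.Adj v y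

/-- `F` is an inclusion-wise maximal subset of `W` inducing a complete
multipartite subgraph of `G`. -/
def MaxCMPon (G : SimpleGraph V) (W F : Set V) : Prop :=
  F ⊆ W ∧ CMP G F ∧ ∀ F'', F'' ⊆ W → F ⊆ F'' → CMP G F'' → F'' = F

/-!
Let `s ∈ S` see two classes of `F`. If `s` split a class `M` (neighbour `p`, non-neighbour `p'`),
take a neighbour `q` of `s` in another class and a vertex `t` of a third one. Either
`{q, t, p, s} + p'` is a prison, or `s ≁ t`; then (H1) and (H2) give a common neighbour `v` of
the triangle `pqt`, and one of `{v, q, p, s} + p'`, `{p, q, t, v} + s`, `{q, t, p, v} + p'` is a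
prison. Hence `s` sees every class entirely or not at all, and if it missed two classes, then
`{x, y, u, w} + s` would be a prison, with `x`, `y` neighbours and `u`, `w` non-neighbours of `s`
in four distinct classes. Each of these prisons has at most two vertices in `S`, hence at most one
edge inside `S`, against (H2).
-/

section

variable {G : SimpleGraph V} {S : Set V}

lemma edge_eq_of_subset_pair {X : Set V} {a b : V} {e : Sym2 V}
    (he : e ∈ edgesWithin G X) (hX : X ⊆ {a, b}) : e = s(a, b) := by
  induction e with
  | h u v =>
    obtain ⟨huv, hu, hv⟩ : G.Adj u v ∧ u ∈ X ∧ v ∈ X := he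
    rcases hX hu with rfl | rfl <;> rcases hX hv with rfl | rfl
    exacts [absurd huv G.irrefl, rfl, Sym2.eq_swap, absurd huv G.irrefl]

lemma H2.false_of_inter_subset_pair (h2 : H2 G S) {Q : Set V} (hQ : InducesPrison G Q)
    {a b : V} (hQS : Q ∩ S ⊆ {a, b}) : False := by
  obtain ⟨e₁, e₂, hne, he₁, he₂⟩ := h2 Q hQ
  exact hne ((edge_eq_of_subset_pair he₁ hQS).trans (edge_eq_of_subset_pair he₂ hQS).symm)

lemma inducesPrison_of_adj {v₀ v₁ v₂ v₃ v₄ : V}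
    (h01 : G.Adj v₀ v₁) (h02 : G.Adj v₀ v₂) (h03 : G.Adj v₀ v₃)
    (h12 : G.Adj v₁ v₂) (h13 : G.Adj v₁ v₃) (h23 : G.Adj v₂ v₃)
    (h40 : G.Adj v₄ v₀) (h41 : G.Adj v₄ v₁) (h42 : ¬G.Adj v₄ v₂) (h43 : ¬G.Adj v₄ v₃)
    (hv₂ : v₄ ≠ v₂) (hv₃ : v₄ ≠ v₃) :
    InducesPrison G {v₀, v₁, v₂, v₃, v₄} := by
  have hadj : ∀ i j, G.Adj (![v₀, v₁, v₂, v₃, v₄] i) (![v₀, v₁, v₂, v₃, v₄] j) ↔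
      prison.Adj i j := by
    intro i j
    fin_cases i <;> fin_cases j <;>
      simp [prison, h01.symm, h02.symm, h03.symm, h12.symm, h13.symm, h23.symm,
        h40.symm, h41.symm, G.adj_comm v₂ v₄, G.adj_comm v₃ v₄, *]
  refine ⟨⟨![v₀, v₁, v₂, v₃, v₄], ?_⟩, ?_, hadj⟩
  · intro i j hij
    fin_cases i <;> fin_cases j <;> simp_all
  · show Set.range ![v₀, v₁, v₂, v₃, v₄] = _
    simp only [Matrix.range_cons, Matrix.range_empty, Set.union_empty, Set.singleton_union]

lemma H2.false_of_prison (h2 : H2 G S) {v₀ v₁ v₂ v₃ v₄ : V}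
    (h01 : G.Adj v₀ v₁) (h02 : G.Adj v₀ v₂) (h03 : G.Adj v₀ v₃)
    (h12 : G.Adj v₁ v₂) (h13 : G.Adj v₁ v₃) (h23 : G.Adj v₂ v₃)
    (h40 : G.Adj v₄ v₀) (h41 : G.Adj v₄ v₁) (h42 : ¬G.Adj v₄ v₂) (h43 : ¬G.Adj v₄ v₃)
    (hv₂ : v₄ ≠ v₂) (hv₃ : v₄ ≠ v₃) {a b : V} (hS : {v₀, v₁, v₂, v₃, v₄} ∩ S ⊆ {a, b}) :
    False :=
  h2.false_of_inter_subset_pair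
    (inducesPrison_of_adj h01 h02 h03 h12 h13 h23 h40 h41 h42 h43 hv₂ hv₃) hS

lemma StrictSupPrison.exists_adj_pair {Q : Set V} (hQ : StrictSupPrison G Q) {x y : V}
    (hx : x ∈ Q) (hy : y ∈ Q) :
    ∃ a b, G.Adj a b ∧ G.Adj a x ∧ G.Adj a y ∧ G.Adj b x ∧ G.Adj b y := by
  classical
  obtain ⟨hcard, u, v, huv⟩ := hQ
  -- `z` is an endpoint of the possible non-edge `uv`, taken outside `{x, y}` when possible, so
  -- that `uv` is none of the pairs of `{a, b, x, y}` other than `xy`.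
  set z := if u = x ∨ u = y then v else u with hz
  have hR : 1 < (Q \ {x, y, z}).ncard := by
    have h3 : ({x, y, z} : Set V).ncard ≤ 3 :=
      (Set.ncard_insert_le _ _).trans (by grw [Set.ncard_insert_le, Set.ncard_singleton])
    have := Set.le_ncard_sdiff {x, y, z} Q
    omega
  have hQfin : Q.Finite := Set.finite_of_ncard_ne_zero (by omega)
  obtain ⟨a, b, ⟨haQ, ha⟩, ⟨hbQ, hb⟩, hab⟩ := (Set.one_lt_ncard_iff hQfin.sdiff).1 hR
  simp only [Set.mem_insert_iff, Set.mem_singleton_iff, not_or] at ha hb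
  have adj : ∀ c ∈ Q, ∀ d ∈ Q, c ≠ d → ¬((c = u ∧ d = v) ∨ (c = v ∧ d = u)) → G.Adj c d :=
    fun c hc d hd hcd h => by_contra fun hn => h (huv c hc d hd hcd hn)
  refine ⟨a, b, adj a haQ b hbQ hab ?_, adj a haQ x hx ?_ ?_, adj a haQ y hy ?_ ?_,
    adj b hbQ x hx ?_ ?_, adj b hbQ y hy ?_ ?_⟩ <;> split_ifs at hz <;> grind

/- (H1) puts `pq` into a near-`K₅`, which contains adjacent common neighbours `a`, `b` of `p`
and `q`; if neither sees `t`, then `{p, q, a, b} + t` is a prison with at most two vertices in `S`. -/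
lemma exists_adj_adj_adj_of_triangle (h1 : H1 G S) (h2 : H2 G S) {p q t : V}
    (hp : p ∉ S) (hq : q ∉ S) (ht : t ∉ S)
    (hpq : G.Adj p q) (hpt : G.Adj p t) (hqt : G.Adj q t) :
    ∃ v, G.Adj v p ∧ G.Adj v q ∧ G.Adj v t := by
  obtain ⟨Q, hQ, hpQ, hqQ⟩ := h1 p q hpq fun h => hp h.1
  obtain ⟨a, b, hab, hap, haq, hbp, hbq⟩ := hQ.exists_adj_pair hpQ hqQ
  by_cases hat : G.Adj a t
  · exact ⟨a, hap, haq, hat⟩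
  by_cases hbt : G.Adj b t
  · exact ⟨b, hbp, hbq, hbt⟩
  exact (h2.false_of_prison hpq hap.symm hbp.symm haq.symm hbq.symm hab hpt.symm hqt.symm
    (fun h => hat h.symm) (fun h => hbt h.symm) (fun h => hbt (h ▸ hab.symm))
    (fun h => hat (h ▸ hab)) (a := a) (b := b)
    (by simp [Set.subset_def, or_imp, forall_and, hp, hq, ht])).elim

lemma H2.adj_or_adj_of_clique (h2 : H2 G S) {s x y u w : V} (hs : s ∈ S) (hx : x ∉ S)
    (hy : y ∉ S) (hu : u ∉ S) (hw : w ∉ S) (hxy : G.Adj x y) (hxu : G.Adj x u)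
    (hxw : G.Adj x w) (hyu : G.Adj y u) (hyw : G.Adj y w) (huw : G.Adj u w)
    (hsx : G.Adj s x) (hsy : G.Adj s y) : G.Adj s u ∨ G.Adj s w := by
  by_contra! h
  exact h2.false_of_prison hxy hxu hxw hyu hyw huw hsx hsy h.1 h.2 (fun h => hu (h ▸ hs))
    (fun h => hw (h ▸ hs)) (a := s) (b := s)
    (by simp [Set.subset_def, or_imp, forall_and, hx, hy, hu, hw])

end

namespace IsCMP

variable {G : SimpleGraph V} {F : Set V} {P : Set (Set V)} {A B : Set V} {a b : V}

lemma mem_of_mem_class (hP : IsCMP G F P) (hA : A ∈ P) (ha : a ∈ A) : a ∈ F :=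
  (hP.1 A hA).2 ha

lemma exists_mem_class (hP : IsCMP G F P) (ha : a ∈ F) : ∃ A ∈ P, a ∈ A := by
  rwa [← hP.2.1] at ha

lemma class_eq_of_mem (hP : IsCMP G F P) (hA : A ∈ P) (hB : B ∈ P) (haA : a ∈ A)
    (haB : a ∈ B) : A = B :=
  by_contra fun h => Set.disjoint_left.1 (hP.2.2.1 A hA B hB h) haA haB

lemma adj (hP : IsCMP G F P) (hA : A ∈ P) (hB : B ∈ P) (hAB : A ≠ B) (ha : a ∈ A)
    (hb : b ∈ B) : G.Adj a b := by
  rw [hP.2.2.2 a (hP.mem_of_mem_class hA ha) b (hP.mem_of_mem_class hB hb)]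
  rintro ⟨C, hC, haC, hbC⟩
  exact hAB ((hP.class_eq_of_mem hA hC ha haC).trans (hP.class_eq_of_mem hC hB hbC hb))

lemma not_adj (hP : IsCMP G F P) (hA : A ∈ P) (ha : a ∈ A) (hb : b ∈ A) : ¬G.Adj a b :=
  fun h => (hP.2.2.2 a (hP.mem_of_mem_class hA ha) b (hP.mem_of_mem_class hA hb)).1 h
    ⟨A, hA, ha, hb⟩

lemma exists_class_ne_ne (hP : IsCMP G F P) (h3 : CMPAtLeast G F 3) (M B : Set V) :
    ∃ T ∈ P, T ≠ M ∧ T ≠ B := by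
  obtain ⟨P', hP', f, hf⟩ := h3
  choose u hu using fun i => (hP'.1 (f i) (hf i)).1
  choose C hC huC using fun i => hP.exists_mem_class (hP'.mem_of_mem_class (hf i) (hu i))
  have hCinj : Function.Injective C := by
    intro i j hij
    by_contra hne
    exact hP.not_adj (hC i) (huC i) (hij ▸ huC j)
      (hP'.adj (hf i) (hf j) (f.injective.ne hne) (hu i) (hu j))
  classical
  by_contra! h
  obtain ⟨i, -, j, -, hij, hCij⟩ := Finset.exists_ne_map_eq_of_card_lt_of_maps_to
    (s := Finset.univ) (t := {M, B}) (f := C) (Finset.card_le_two.trans_lt (by simp))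
    fun i _ => by simpa [or_iff_not_imp_left] using h _ (hC i)
  exact hij (hCinj hCij)

end IsCMP

section

variable {G : SimpleGraph V} {S F : Set V} {P : Set (Set V)} {s : V}

lemma IsCMP.adj_of_adj_of_mem_class (h1 : H1 G S) (h2 : H2 G S) (hFS : F ⊆ Sᶜ)
    (hP : IsCMP G F P) (h3 : CMPAtLeast G F 3) (hs : s ∈ S) {M B : Set V} (hM : M ∈ P)
    (hB : B ∈ P) (hBM : B ≠ M) {p p' q : V} (hp : p ∈ M) (hp' : p' ∈ M) (hq : q ∈ B)
    (hsp : G.Adj s p) (hsq : G.Adj s q) : G.Adj s p' := by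
  by_contra hsp'
  obtain ⟨T, hT, hTM, hTB⟩ := hP.exists_class_ne_ne h3 M B
  obtain ⟨t, ht⟩ := (hP.1 T hT).1
  have hpS : p ∉ S := hFS (hP.mem_of_mem_class hM hp)
  have hp'S : p' ∉ S := hFS (hP.mem_of_mem_class hM hp')
  have hqS : q ∉ S := hFS (hP.mem_of_mem_class hB hq)
  have htS : t ∉ S := hFS (hP.mem_of_mem_class hT ht)
  have hpq := hP.adj hM hB hBM.symm hp hq
  have hpt := hP.adj hM hT hTM.symm hp ht
  have hqt := hP.adj hB hT hTB.symm hq ht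
  have hp'q := hP.adj hM hB hBM.symm hp' hq
  have hp't := hP.adj hM hT hTM.symm hp' ht
  have hp'p := hP.not_adj hM hp' hp
  have hp'p_ne : p' ≠ p := fun h => hsp' (h ▸ hsp)
  have hp's_ne : p' ≠ s := fun h => hp'S (h ▸ hs)
  by_cases hst : G.Adj s t
  · exact h2.false_of_prison hqt hpq.symm hsq.symm hpt.symm hst.symm hsp.symm hp'q hp't hp'p
      (fun h => hsp' h.symm) hp'p_ne hp's_ne (a := s) (b := s)
      (by simp [Set.subset_def, or_imp, forall_and, hpS, hp'S, hqS, htS])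
  obtain ⟨v, hvp, hvq, hvt⟩ := exists_adj_adj_adj_of_triangle h1 h2 hpS hqS htS hpq hpt hqt
  by_cases hvp' : G.Adj v p'
  · by_cases hvs : G.Adj v s
    · exact h2.false_of_prison hvq hvp hvs hpq.symm hsq.symm hsp.symm hvp'.symm hp'q hp'p
        (fun h => hsp' h.symm) hp'p_ne hp's_ne (a := s) (b := v)
        (by simp [Set.subset_def, or_imp, forall_and, hpS, hp'S, hqS])
    · exact h2.false_of_prison hpq hpt hvp.symm hqt hvq.symm hvt.symm hsp hsq hst
        (fun h => hvs h.symm) (fun h => htS (h ▸ hs)) (fun h => hst (h ▸ hvt))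
        (a := s) (b := v) (by simp [Set.subset_def, or_imp, forall_and, hpS, hqS, htS])
  · exact h2.false_of_prison hqt hpq.symm hvq.symm hpt.symm hvt.symm hvp.symm hp'q hp't hp'p
      (fun h => hvp' h.symm) hp'p_ne (fun h => hp'p (h ▸ hvp))
      (a := v) (b := v) (by simp [Set.subset_def, or_imp, forall_and, hpS, hp'S, hqS, htS])

lemma IsCMP.class_eq_of_not_adj (h2 : H2 G S) (hFS : F ⊆ Sᶜ) (hP : IsCMP G F P) (hs : s ∈ S)
    {C D : Set V} (hC : C ∈ P) (hD : D ∈ P) (hCD : C ≠ D) {x y : V} (hx : x ∈ C) (hy : y ∈ D)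
    (hsC : ∀ z ∈ C, G.Adj s z) (hsD : ∀ z ∈ D, G.Adj s z) {A E : Set V} (hA : A ∈ P)
    (hE : E ∈ P) {u w : V} (hu : u ∈ A) (hw : w ∈ E) (hsu : ¬G.Adj s u) (hsw : ¬G.Adj s w) :
    A = E := by
  by_contra hAE
  have hmissed : ∀ {K z}, z ∈ K → ¬G.Adj s z → K ≠ C ∧ K ≠ D := fun hz hsz =>
    ⟨fun h => hsz (hsC _ (h ▸ hz)), fun h => hsz (hsD _ (h ▸ hz))⟩
  obtain ⟨hAC, hAD⟩ := hmissed hu hsu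
  obtain ⟨hEC, hED⟩ := hmissed hw hsw
  exact (h2.adj_or_adj_of_clique hs (hFS (hP.mem_of_mem_class hC hx))
    (hFS (hP.mem_of_mem_class hD hy)) (hFS (hP.mem_of_mem_class hA hu))
    (hFS (hP.mem_of_mem_class hE hw)) (hP.adj hC hD hCD hx hy) (hP.adj hC hA hAC.symm hx hu)
    (hP.adj hC hE hEC.symm hx hw) (hP.adj hD hA hAD.symm hy hu) (hP.adj hD hE hED.symm hy hw)
    (hP.adj hA hE hAE hu hw) (hsC x hx) (hsD y hy)).elim hsu hsw

end

theorem consistentFs3_general {V : Type*} (G : SimpleGraph V)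
    (S : Set V) (h1 : H1 G S) (h2 : H2 G S)
    (F : Set V) (hF : Cmd G Sᶜ 3 F) (s : V) (hs : s ∈ S) :
    ∀ P : Set (Set V), IsCMP G F P →
      (∃ C ∈ P, ∃ D ∈ P, C ≠ D ∧ (∃ x ∈ C, G.Adj s x) ∧ (∃ y ∈ D, G.Adj s y)) →
      (∃ C ∈ P, {x ∈ F | G.Adj s x} = F \ C) ∨ (∀ x ∈ F, G.Adj s x) := by
  rintro P hP ⟨C, hC, D, hD, hCD, ⟨x, hxC, hsx⟩, ⟨y, hyD, hsy⟩⟩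
  obtain ⟨hFS, hF3, -⟩ := hF
  have hfull : ∀ M ∈ P, ∀ p ∈ M, G.Adj s p → ∀ p' ∈ M, G.Adj s p' := by
    intro M hM p hp hsp p' hp'
    by_cases hMC : M = C
    · exact hP.adj_of_adj_of_mem_class h1 h2 hFS hF3 hs hM hD (hMC ▸ hCD.symm) hp hp' hyD hsp hsy
    · exact hP.adj_of_adj_of_mem_class h1 h2 hFS hF3 hs hM hC (Ne.symm hMC) hp hp' hxC hsp hsx
  by_cases hall : ∀ u ∈ F, G.Adj s u
  · exact Or.inr hall
  obtain ⟨w, hwF, hsw⟩ := not_forall₂.1 hall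
  obtain ⟨E, hE, hwE⟩ := hP.exists_mem_class hwF
  refine Or.inl ⟨E, hE, Set.ext fun u => ⟨fun ⟨huF, hsu⟩ => ⟨huF, fun huE => ?_⟩,
    fun ⟨huF, huE⟩ => ⟨huF, ?_⟩⟩⟩
  · exact hsw (hfull E hE u huE hsu w hwE)
  obtain ⟨A, hA, huA⟩ := hP.exists_mem_class huF
  by_contra hsu
  exact huE (hP.class_eq_of_not_adj h2 hFS hs hC hD hCD hxC hyD (hfull C hC x hxC hsx)
    (hfull D hD y hyD hsy) hA hE huA hwE hsu hsw ▸ huA)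

/-- Under (H1) and (H2), for `F ∈ cmd₃(G−S)` and `s ∈ S`: if
`N(s)` intersects more than one class of `F`, then `N(s) ∩ F = F ∖ C` for a single
class `C` of `F`, or `N(s) ∩ F = F`. -/
theorem consistentFs3 {V : Type*} [Fintype V] (G : SimpleGraph V)
    (S : Set V) (h1 : H1 G S) (h2 : H2 G S)
    (F : Set V) (hF : Cmd G Sᶜ 3 F) (s : V) (hs : s ∈ S) :
    ∀ P : Set (Set V), IsCMP G F P →
      (∃ C ∈ P, ∃ D ∈ P, C ≠ D ∧ (∃ x ∈ C, G.Adj s x) ∧ (∃ y ∈ D, G.Adj s y)) →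
      (∃ C ∈ P, {x ∈ F | G.Adj s x} = F \ C) ∨ (∀ x ∈ F, G.Adj s x) :=
  consistentFs3_general G S h1 h2 F hF s hs

end PrisonFreePaper
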